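/- Every finitely generated projective module P over a commutative ring A admits an (Ω,d)-connection ∇ : P → Ω⊗_A P for any derivation d : A → Ω; consequently the Atiyah-Karoubi sequence 0 → Ω⊗_A P → Pr¹_Ω(P) → P → 0 is split as left A-modules. -/
import Mathlib

/- `A` is a commutative unital ring, `P` a finitely generated projective `A`-module,
`Ω` an `A`-module (symmetric bimodule), `d : A → Ω` a derivation.
`Pr¹_Ω(P) = (Ω⊗_A P) × P` with left `A`-action `a(ω,p) = (aω + d(a)⊗p, ap)`, and the
Atiyah–Karoubi sequence is `0 → Ω⊗_A P → Pr¹_Ω(P) → P → 0` with projection `(ω,p) ↦ p`. -/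

open scoped TensorProduct

variable {A P Ω : Type*} [CommRing A] [AddCommGroup P] [Module A P]
  [AddCommGroup Ω] [Module A Ω]

/-- Every finitely generated projective module `P` over a commutative ring `A` admits an
`(Ω,d)`-connection `∇ : P → Ω⊗_A P` for any derivation `d : A → Ω`; consequently the
Atiyah–Karoubi sequence `0 → Ω⊗_A P → Pr¹_Ω(P) → P → 0` is split as left `A`-modules:
there is an additive section `s` of the projection which is `A`-linear for the left
`A`-structure `a(ω,p) = (aω + d(a)⊗p, ap)`. -/
theorem statement14 [Module.Finite A P] [Module.Projective A P]
    (d : A → Ω)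
    (hd_add : ∀ a b : A, d (a + b) = d a + d b)
    (hd_leib : ∀ a b : A, d (a * b) = a • d b + b • d a) :
    (∃ Nabla : P → Ω ⊗[A] P,
      (∀ x y : P, Nabla (x + y) = Nabla x + Nabla y) ∧
      (∀ (a : A) (x : P), Nabla (a • x) = a • Nabla x + d a ⊗ₜ[A] x)) ∧
    (∃ s : P → (Ω ⊗[A] P) × P,
      (∀ x y : P, s (x + y) = s x + s y) ∧
      (∀ (a : A) (x : P),
        s (a • x) = (a • (s x).1 + d a ⊗ₜ[A] (s x).2, a • (s x).2)) ∧
      (∀ x : P, (s x).2 = x)) := by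
  have hd0 : d 0 = 0 := by
    have := hd_add 0 0
    simp only [add_zero] at this
    exact add_eq_left.mp this.symm
  obtain ⟨σ, hσ⟩ := (Module.projective_def (R := A) (P := P)).mp ‹_›
  set Nabla : P → Ω ⊗[A] P := fun p => (σ p).sum (fun q c => d c ⊗ₜ[A] q) with hN
  have hadd : ∀ x y : P, Nabla (x + y) = Nabla x + Nabla y := by
    intro x y
    simp only [hN, map_add]
    exact Finsupp.sum_add_index' (fun q => by simp [hd0]) (fun q a b => by
      rw [hd_add, TensorProduct.add_tmul])
  have hleib : ∀ (a : A) (x : P), Nabla (a • x) = a • Nabla x + d a ⊗ₜ[A] x := by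
    intro a x
    have hx : (σ x).sum (fun q c => c • q) = x := by
      have := hσ x
      rwa [Finsupp.linearCombination_apply] at this
    simp only [hN, map_smul]
    rw [Finsupp.sum_smul_index' (fun q => by simp [hd0])]
    have : ((σ x).sum fun q c => d (a • c) ⊗ₜ[A] q)
        = (σ x).sum fun q c => a • (d c ⊗ₜ[A] q) + d a ⊗ₜ[A] (c • q) := by
      refine Finsupp.sum_congr fun q _ => ?_
      rw [smul_eq_mul, hd_leib, TensorProduct.add_tmul, TensorProduct.smul_tmul']
      congr 1
      exact TensorProduct.smul_tmul _ _ _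
    rw [this, Finsupp.sum_add]
    congr 1
    · rw [Finsupp.smul_sum]
    · calc ((σ x).sum fun q c => d a ⊗ₜ[A] (c • q))
          = d a ⊗ₜ[A] ((σ x).sum fun q c => c • q) := by
            rw [Finsupp.sum, Finsupp.sum, TensorProduct.tmul_sum]
        _ = d a ⊗ₜ[A] x := by rw [hx]
  refine ⟨⟨Nabla, hadd, hleib⟩, ⟨fun x => (Nabla x, x), ?_, ?_, fun x => rfl⟩⟩
  · intro x y; simp [hadd x y, Prod.ext_iff]
  · intro a x; simp [hleib a x]
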